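/- arXiv:math/0001073 — 3 statements merged into one kernel-verified Lean document; each statement's English description precedes it below -/
import Mathlib

section
/- Let (a/b) > (p/q)^N with 0 < p < q, a,b > 0, and N ≥ 2 an integer. Then the measure m on ℤ defined by m(y) = (1/Z) (a/b)^y / (1 + (p/q)^y)^N is normalizable, i.e. the sum Z = ∑_{y ∈ ℤ} (a/b)^y / (1 + (p/q)^y)^N is finite. -/
/-- For `0 < p < q`, `a, b > 0`, `N ≥ 2`, and `(a/b) > (p/q)^N`
(together with the paper's standing assumption `a/b < 1`), the unnormalized
reversible measure `m(y) = (a/b)^y / (1 + (p/q)^y)^N` on `ℤ` is normalizable,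
i.e. `Z = ∑_{y ∈ ℤ} (a/b)^y / (1 + (p/q)^y)^N < ∞`. -/
theorem rod_reversible_measure_normalizable
    (a b p q : ℝ) (N : ℕ) (ha : 0 < a) (hb : 0 < b)
    (hp : 0 < p) (hpq : p < q) (hN : 2 ≤ N)
    (hcond : (p / q) ^ N < a / b) (hab : a / b < 1) :
    Summable (fun y : ℤ => (a / b) ^ y / (1 + (p / q) ^ y) ^ N) := by
  set r := a / b with hr
  set s := p / q with hs
  have hr0 : 0 < r := div_pos ha hb
  have hs0 : 0 < s := div_pos hp (hp.trans hpq)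
  have hs1 : s < 1 := (div_lt_one (hp.trans hpq)).2 hpq
  have hsN0 : 0 < s ^ N := pow_pos hs0 N
  have hnonneg : ∀ y : ℤ, 0 ≤ r ^ y / (1 + s ^ y) ^ N := by
    intro y
    have h1 : (0:ℝ) < 1 + s ^ y := by positivity
    positivity
  apply Summable.of_nat_of_neg
  · -- positive side: bounded by r^n
    refine Summable.of_nonneg_of_le (fun n => hnonneg _) ?_ (summable_geometric_of_lt_one hr0.le hab)
    · intro n
      rw [zpow_natCast]
      have hd : (1:ℝ) ≤ (1 + s ^ (n:ℤ)) ^ N := by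
        apply one_le_pow₀
        have : (0:ℝ) < s ^ (n:ℤ) := zpow_pos hs0 _
        linarith
      exact div_le_self (pow_nonneg hr0.le n) hd
  · -- negative side: bounded by (s^N / r)^n
    have hgeo : Summable fun n : ℕ => (s ^ N / r) ^ n := by
      apply summable_geometric_of_lt_one (by positivity)
      rw [div_lt_one hr0]; exact hcond
    refine Summable.of_nonneg_of_le (fun n => hnonneg _) ?_ hgeo
    · intro n
      have hsn : (0:ℝ) < s ^ (-(n:ℤ)) := zpow_pos hs0 _
      have hrn : (0:ℝ) < r ^ (-(n:ℤ)) := zpow_pos hr0 _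
      have h1 : r ^ (-(n:ℤ)) / (1 + s ^ (-(n:ℤ))) ^ N
          ≤ r ^ (-(n:ℤ)) / (s ^ (-(n:ℤ))) ^ N := by
        apply div_le_div_of_nonneg_left hrn.le (pow_pos hsn N)
        apply pow_le_pow_left₀ hsn.le
        linarith
      have h2 : r ^ (-(n:ℤ)) / (s ^ (-(n:ℤ))) ^ N = (s ^ N / r) ^ n := by
        rw [zpow_neg, zpow_neg, zpow_natCast, zpow_natCast, inv_pow, div_inv_eq_mul,
          ← pow_mul, div_eq_mul_inv, mul_pow, inv_pow, ← pow_mul,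
          Nat.mul_comm N n, mul_comm]
      exact h1.trans h2.le
end

section
/- Let L₁, L₂ be bounded nonpositive self-adjoint operators on a Hilbert space H, and set L^γ = γL₁ + L₂ for γ > 0. Suppose ker L₁ = ℂ·1 (constants) is one-dimensional, spanned by a unit vector u, and suppose f ⟂ u with ⟨f, L₁ f⟩ ≤ -c‖f‖² for some c > 0 on the orthogonal complement of u (spectral gap for L₁). Then ‖e^{t L^γ} f‖ → 0 as γ → ∞, for every t > 0. -/
/-!
Write `g s = e^{s L^γ} f = p s + a s • u` with `p s ⟂ u`. On `u^⊥` the gap makes `L^γ` dissipate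
at rate `c γ`, so `‖g‖²` decreases and `∫₀ᵗ ‖p‖² ≤ ‖f‖² / (2 c γ)`. Since `L₁ u = 0`, the
coefficient `a` only moves through `L₂ u`: `a' = ⟪p, L₂ u⟫ + a ⟪u, L₂ u⟫` with `⟪u, L₂ u⟫ ≤ 0`,
so `a² ≤ 2 ‖f‖ ‖L₂ u‖ ∫₀ᵗ ‖p‖`, which is `O(γ^{-1/2})` by AM-GM. As `‖g‖²` decreases,
`t ‖g t‖² ≤ ∫₀ᵗ (‖p‖² + a²) → 0`.
-/

open Filter Set NormedSpace intervalIntegral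
open scoped RealInnerProductSpace

lemma sub_le_integral_of_hasDerivAt_le {F F' φ : ℝ → ℝ} {a b : ℝ} (hab : a ≤ b)
    (hF : ∀ x, HasDerivAt F (F' x) x) (hφ : Continuous φ) (hle : ∀ x ∈ Ioo a b, F' x ≤ φ x) :
    F b - F a ≤ ∫ x in a..b, φ x :=
  sub_le_integral_of_hasDeriv_right_of_le hab
    (continuous_iff_continuousAt.2 fun x => (hF x).continuousAt).continuousOn
    (fun x _ => (hF x).hasDerivWithinAt) hφ.integrableOn_Icc hle

lemma two_mul_sqrt_mul_integral_le {φ : ℝ → ℝ} (hφ : Continuous φ) {γ t : ℝ} (hγ : 0 ≤ γ)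
    (ht : 0 ≤ t) : 2 * √γ * ∫ s in (0)..t, φ s ≤ γ * (∫ s in (0)..t, φ s ^ 2) + t := by
  have hφ2 : Continuous fun s => γ * φ s ^ 2 := by fun_prop
  have := integral_mono_on (μ := MeasureTheory.volume) (f := fun s => 2 * √γ * φ s)
    (g := fun s => γ * φ s ^ 2 + 1) ht ((hφ.const_mul _).intervalIntegrable 0 t)
    ((hφ2.add continuous_const).intervalIntegrable 0 t) fun s _ => by
      have := two_mul_le_add_sq (√γ * φ s) 1
      rw [mul_pow, Real.sq_sqrt hγ] at this
      linarith
  rwa [integral_const_mul, integral_add (hφ2.intervalIntegrable 0 t) intervalIntegrable_const,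
    integral_const_mul, integral_const, sub_zero, smul_eq_mul, mul_one] at this

section Orthogonal

variable {H : Type*} [NormedAddCommGroup H] [InnerProductSpace ℝ H] {u : H}

lemma inner_sub_inner_smul_self (hu : ‖u‖ = 1) (x : H) : ⟪x - ⟪x, u⟫ • u, u⟫ = 0 := by
  rw [inner_sub_left, real_inner_smul_left, real_inner_self_eq_norm_sq, hu]
  ring

lemma norm_sub_inner_smul_sq_add_inner_sq (hu : ‖u‖ = 1) (x : H) :
    ‖x - ⟪x, u⟫ • u‖ ^ 2 + ⟪x, u⟫ ^ 2 = ‖x‖ ^ 2 := by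
  rw [norm_sub_sq_real, real_inner_smul_right, norm_smul, hu, Real.norm_eq_abs]
  ring_nf
  rw [sq_abs]
  ring

lemma inner_apply_self_eq_of_apply_eq_zero {L : H →L[ℝ] H} (hL : (L : H →ₗ[ℝ] H).IsSymmetric)
    (hu0 : L u = 0) (x : H) : ⟪L x, x⟫ = ⟪L (x - ⟪x, u⟫ • u), x - ⟪x, u⟫ • u⟫ := by
  have hLx : L (x - ⟪x, u⟫ • u) = L x := by simp [hu0]
  have hLxu : ⟪L x, u⟫ = ⟪x, L u⟫ := hL x u
  rw [hLx, inner_sub_right, real_inner_smul_right, hLxu, hu0, inner_zero_right]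
  ring

lemma mul_norm_sub_inner_smul_sq_le {L : H →L[ℝ] H} (hL : (L : H →ₗ[ℝ] H).IsSymmetric)
    (hu : ‖u‖ = 1) (hu0 : L u = 0) {c : ℝ}
    (hgap : ∀ g : H, ⟪g, u⟫ = 0 → ⟪g, L g⟫ ≤ -c * ‖g‖ ^ 2) (x : H) :
    c * ‖x - ⟪x, u⟫ • u‖ ^ 2 ≤ -⟪L x, x⟫ := by
  have := hgap _ (inner_sub_inner_smul_self hu x)
  rw [real_inner_comm] at this
  rw [inner_apply_self_eq_of_apply_eq_zero hL hu0]
  linarith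

lemma mul_norm_sub_inner_smul_sq_le_smul_add {L₁ L₂ : H →L[ℝ] H}
    (h1 : (L₁ : H →ₗ[ℝ] H).IsSymmetric) (hneg2 : ∀ x, ⟪L₂ x, x⟫ ≤ 0) (hu : ‖u‖ = 1)
    (hu0 : L₁ u = 0) {c γ : ℝ} (hgap : ∀ g : H, ⟪g, u⟫ = 0 → ⟪g, L₁ g⟫ ≤ -c * ‖g‖ ^ 2)
    (hγ : 0 ≤ γ) (x : H) : γ * c * ‖x - ⟪x, u⟫ • u‖ ^ 2 ≤ -⟪(γ • L₁ + L₂) x, x⟫ := by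
  have := mul_le_mul_of_nonneg_left (mul_norm_sub_inner_smul_sq_le h1 hu hu0 hgap x) hγ
  simp only [add_apply, smul_apply, inner_add_left,
    real_inner_smul_left]
  linarith [hneg2 x]

end Orthogonal

section Orbit

variable {H : Type*} [NormedAddCommGroup H] [InnerProductSpace ℝ H] [CompleteSpace H]
  (L : H →L[ℝ] H) (f : H)

lemma hasDerivAt_exp_smul_apply (s : ℝ) :
    HasDerivAt (fun s : ℝ => exp (s • L) f) (L (exp (s • L) f)) s := by
  simpa using (hasDerivAt_exp_smul_const' (𝕂 := ℝ) L s).clm_apply (hasDerivAt_const s f)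

lemma continuous_exp_smul_apply : Continuous fun s : ℝ => exp (s • L) f :=
  continuous_iff_continuousAt.2 fun s => (hasDerivAt_exp_smul_apply L f s).continuousAt

lemma hasDerivAt_norm_exp_smul_apply_sq (s : ℝ) :
    HasDerivAt (fun s : ℝ => ‖exp (s • L) f‖ ^ 2) (2 * ⟪L (exp (s • L) f), exp (s • L) f⟫) s := by
  have hg := hasDerivAt_exp_smul_apply L f s
  simpa only [real_inner_self_eq_norm_sq, real_inner_comm (exp (s • L) f), ← two_mul] using
    hg.inner ℝ hg

variable {L}

lemma antitone_norm_exp_smul_apply_sq (hL : ∀ x, ⟪L x, x⟫ ≤ 0) :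
    Antitone fun s : ℝ => ‖exp (s • L) f‖ ^ 2 :=
  antitone_of_hasDerivAt_nonpos (hasDerivAt_norm_exp_smul_apply_sq L f) fun s => by
    simpa using mul_nonpos_of_nonneg_of_nonpos zero_le_two (hL (exp (s • L) f))

lemma norm_exp_smul_apply_le (hL : ∀ x, ⟪L x, x⟫ ≤ 0) {s : ℝ} (hs : 0 ≤ s) :
    ‖exp (s • L) f‖ ≤ ‖f‖ := by
  have := antitone_norm_exp_smul_apply_sq f hL hs
  simp only [zero_smul, exp_zero, one_apply_eq_self] at this
  exact (pow_le_pow_iff_left₀ (norm_nonneg _) (norm_nonneg _) two_ne_zero).mp this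

lemma two_mul_integral_le_norm_sq {Q : H → ℝ} (hQ : Continuous Q) (hLQ : ∀ x, Q x ≤ -⟪L x, x⟫)
    {t : ℝ} (ht : 0 ≤ t) : 2 * ∫ s in (0)..t, Q (exp (s • L) f) ≤ ‖f‖ ^ 2 := by
  have := sub_le_integral_of_hasDerivAt_le ht (hasDerivAt_norm_exp_smul_apply_sq L f)
    ((hQ.comp (continuous_exp_smul_apply L f)).const_mul (-2 : ℝ))
    (fun s _ => by simp only [Function.comp_apply]; linarith [hLQ (exp (s • L) f)])
  rw [integral_const_mul] at this
  simp only [zero_smul, exp_zero, one_apply_eq_self, Function.comp_apply] at this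
  nlinarith [sq_nonneg ‖exp (t • L) f‖]

variable {u : H}

lemma hasDerivAt_inner_exp_smul_apply (hL : (L : H →ₗ[ℝ] H).IsSymmetric) (s : ℝ) :
    HasDerivAt (fun s : ℝ => ⟪exp (s • L) f, u⟫) ⟪exp (s • L) f, L u⟫ s := by
  have hsymm : ⟪L (exp (s • L) f), u⟫ = ⟪exp (s • L) f, L u⟫ := hL _ u
  simpa [hsymm] using (hasDerivAt_exp_smul_apply L f s).inner ℝ (hasDerivAt_const s u)

lemma inner_exp_smul_apply_sq_le (hL : (L : H →ₗ[ℝ] H).IsSymmetric) (hdiss : ∀ x, ⟪L x, x⟫ ≤ 0)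
    (hu : ‖u‖ = 1) (hf : ⟪f, u⟫ = 0) {s t : ℝ} (hs : 0 ≤ s) (hst : s ≤ t) :
    ⟪exp (s • L) f, u⟫ ^ 2 ≤
      2 * ‖f‖ * ‖L u‖ * ∫ r in (0)..t, ‖exp (r • L) f - ⟪exp (r • L) f, u⟫ • u‖ := by
  set g := fun r : ℝ => exp (r • L) f
  have hg : Continuous g := continuous_exp_smul_apply L f
  have hp : Continuous fun r => ‖g r - ⟪g r, u⟫ • u‖ := by fun_prop
  have hder : ∀ r, HasDerivAt (fun r => ⟪g r, u⟫ ^ 2) (2 * ⟪g r, u⟫ * ⟪g r, L u⟫) r := fun r => by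
    simpa using (hasDerivAt_inner_exp_smul_apply f hL r).fun_pow 2
  have hrate : ∀ r ∈ Ioo 0 s, 2 * ⟪g r, u⟫ * ⟪g r, L u⟫ ≤
      2 * ‖f‖ * ‖L u‖ * ‖g r - ⟪g r, u⟫ • u‖ := by
    intro r hr
    have hsplit : ⟪g r, L u⟫ = ⟪g r - ⟪g r, u⟫ • u, L u⟫ + ⟪g r, u⟫ * ⟪u, L u⟫ := by
      rw [inner_sub_left, real_inner_smul_left]
      ring
    have hLu : ⟪u, L u⟫ ≤ 0 := real_inner_comm u (L u) ▸ hdiss u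
    have ha : |⟪g r, u⟫| ≤ ‖f‖ := by
      simpa [hu] using (abs_real_inner_le_norm (g r) u).trans
        (mul_le_mul_of_nonneg_right (norm_exp_smul_apply_le f hdiss hr.1.le) (norm_nonneg u))
    calc 2 * ⟪g r, u⟫ * ⟪g r, L u⟫
        = 2 * (⟪g r, u⟫ * ⟪g r - ⟪g r, u⟫ • u, L u⟫) + 2 * ⟪g r, u⟫ ^ 2 * ⟪u, L u⟫ := by
          rw [hsplit]; ring
      _ ≤ 2 * (|⟪g r, u⟫| * |⟪g r - ⟪g r, u⟫ • u, L u⟫|) := by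
          rw [← abs_mul]
          nlinarith [le_abs_self (⟪g r, u⟫ * ⟪g r - ⟪g r, u⟫ • u, L u⟫), sq_nonneg ⟪g r, u⟫]
      _ ≤ 2 * (‖f‖ * (‖g r - ⟪g r, u⟫ • u‖ * ‖L u‖)) := by
          gcongr
          exact abs_real_inner_le_norm _ _
      _ = 2 * ‖f‖ * ‖L u‖ * ‖g r - ⟪g r, u⟫ • u‖ := by ring
  have hint := sub_le_integral_of_hasDerivAt_le hs hder (hp.const_mul _) hrate
  have hmono : ∫ r in (0)..s, ‖g r - ⟪g r, u⟫ • u‖ ≤ ∫ r in (0)..t, ‖g r - ⟪g r, u⟫ • u‖ :=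
    integral_mono_interval le_rfl hs hst (.of_forall fun r => norm_nonneg _)
      (hp.intervalIntegrable 0 t)
  simp only [g, zero_smul, exp_zero, one_apply_eq_self, hf, integral_const_mul] at hint
  nlinarith [mul_nonneg (mul_nonneg zero_le_two (norm_nonneg f)) (norm_nonneg (L u))]

/-- Since `‖g‖²` decreases, `t ‖g t‖²` is at most its integral over `[0, t]`. -/
lemma mul_norm_exp_smul_apply_sq_le (hdiss : ∀ x, ⟪L x, x⟫ ≤ 0) (hu : ‖u‖ = 1) {A t : ℝ}
    (ht : 0 ≤ t) (hA : ∀ s ∈ Icc 0 t, ⟪exp (s • L) f, u⟫ ^ 2 ≤ A) :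
    t * ‖exp (t • L) f‖ ^ 2 ≤
      (∫ s in (0)..t, ‖exp (s • L) f - ⟪exp (s • L) f, u⟫ • u‖ ^ 2) + t * A := by
  set g := fun s : ℝ => exp (s • L) f
  set q := fun s => ‖g s - ⟪g s, u⟫ • u‖ ^ 2
  have hg : Continuous g := continuous_exp_smul_apply L f
  have hq : Continuous q := by fun_prop
  have := integral_mono_on (μ := MeasureTheory.volume) (f := fun _ => ‖g t‖ ^ 2)
    (g := fun s => q s + A) ht intervalIntegrable_const
    ((hq.add continuous_const).intervalIntegrable 0 t) fun s hs => by
      have hpyth := norm_sub_inner_smul_sq_add_inner_sq hu (g s)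
      have := antitone_norm_exp_smul_apply_sq f hdiss hs.2
      linarith [hA s hs]
  simpa [integral_add (hq.intervalIntegrable 0 t) intervalIntegrable_const] using this

end Orbit

lemma norm_exp_smul_add_apply_sq_le {H : Type*} [NormedAddCommGroup H] [InnerProductSpace ℝ H]
    [CompleteSpace H] {L₁ L₂ : H →L[ℝ] H} {u f : H} {c γ t : ℝ} (h1 : IsSelfAdjoint L₁)
    (h2 : IsSelfAdjoint L₂) (hneg2 : ∀ x, ⟪L₂ x, x⟫ ≤ 0) (hu : ‖u‖ = 1) (hu0 : L₁ u = 0)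
    (hc : 0 < c) (hgap : ∀ g : H, ⟪g, u⟫ = 0 → ⟪g, L₁ g⟫ ≤ -c * ‖g‖ ^ 2) (hf : ⟪f, u⟫ = 0)
    (hγ : 0 < γ) (ht : 0 < t) :
    ‖exp (t • (γ • L₁ + L₂)) f‖ ^ 2 ≤
      ‖f‖ ^ 2 / (2 * c) / t * γ⁻¹ + ‖f‖ * ‖L₂ u‖ * (‖f‖ ^ 2 / (2 * c) + t) * (√γ)⁻¹ := by
  set L := γ • L₁ + L₂
  set K := ‖f‖ ^ 2 / (2 * c)
  set P := fun s : ℝ => ‖exp (s • L) f - ⟪exp (s • L) f, u⟫ • u‖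
  have hdissip := mul_norm_sub_inner_smul_sq_le_smul_add h1.isSymmetric hneg2 hu hu0 hgap hγ.le
  have hdiss : ∀ x, ⟪L x, x⟫ ≤ 0 := fun x => by
    nlinarith [hdissip x, mul_nonneg (mul_nonneg hγ.le hc.le) (sq_nonneg ‖x - ⟪x, u⟫ • u‖)]
  have hsymm : (L : H →ₗ[ℝ] H).IsSymmetric :=
    ((IsSelfAdjoint.all γ).smul h1 |>.add h2).isSymmetric
  have hLu : L u = L₂ u := by simp [L, hu0]
  have hP : Continuous P := by
    have := continuous_exp_smul_apply L f
    fun_prop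
  have hE : ∫ s in (0)..t, P s ^ 2 ≤ K * γ⁻¹ := by
    have := two_mul_integral_le_norm_sq f (by fun_prop) hdissip ht.le
    rw [integral_const_mul] at this
    rw [le_mul_inv_iff₀ hγ, le_div_iff₀ (by positivity)]
    nlinarith
  have hI : 2 * ∫ s in (0)..t, P s ≤ (K + t) * (√γ)⁻¹ := by
    rw [le_mul_inv_iff₀ (Real.sqrt_pos.2 hγ)]
    linarith [two_mul_sqrt_mul_integral_le hP hγ.le ht.le, (le_mul_inv_iff₀ hγ).1 hE]
  have hA : ∀ s ∈ Icc 0 t, ⟪exp (s • L) f, u⟫ ^ 2 ≤ 2 * ‖f‖ * ‖L₂ u‖ * ∫ s in (0)..t, P s :=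
    fun s hs => hLu ▸ inner_exp_smul_apply_sq_le f hsymm hdiss hu hf hs.1 hs.2
  refine le_of_mul_le_mul_left ?_ ht
  calc t * ‖exp (t • L) f‖ ^ 2
      ≤ (∫ s in (0)..t, P s ^ 2) + t * (‖f‖ * ‖L₂ u‖) * (2 * ∫ s in (0)..t, P s) := by
        linarith [mul_norm_exp_smul_apply_sq_le f hdiss hu ht.le hA]
    _ ≤ K * γ⁻¹ + t * (‖f‖ * ‖L₂ u‖) * ((K + t) * (√γ)⁻¹) := by
        gcongr ?_ + _ * ?_
    _ = t * (K / t * γ⁻¹ + ‖f‖ * ‖L₂ u‖ * (K + t) * (√γ)⁻¹) := by field_simp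

theorem speeded_semigroup_spectral_gap_general
    {H : Type*} [NormedAddCommGroup H] [InnerProductSpace ℝ H] [CompleteSpace H]
    (L₁ L₂ : H →L[ℝ] H) (h1 : IsSelfAdjoint L₁) (h2 : IsSelfAdjoint L₂)
    (hneg2 : ∀ x : H, (inner ℝ (L₂ x) x : ℝ) ≤ 0)
    (u : H) (hu : ‖u‖ = 1)
    (hker : LinearMap.ker (L₁ : H →ₗ[ℝ] H) = Submodule.span ℝ {u})
    (c : ℝ) (hc : 0 < c)
    (hgap : ∀ g : H, (inner ℝ g u : ℝ) = 0 → (inner ℝ g (L₁ g) : ℝ) ≤ -c * ‖g‖ ^ 2)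
    (f : H) (hf : (inner ℝ f u : ℝ) = 0)
    (t : ℝ) (ht : 0 < t) :
    Tendsto (fun γ : ℝ => ‖NormedSpace.exp (t • (γ • L₁ + L₂)) f‖)
      atTop (nhds 0) := by
  have hu0 : L₁ u = 0 := by simpa using hker.ge (Submodule.mem_span_singleton_self u)
  set K := ‖f‖ ^ 2 / (2 * c)
  have hbound : Tendsto (fun γ : ℝ => K / t * γ⁻¹ + ‖f‖ * ‖L₂ u‖ * (K + t) * (√γ)⁻¹)
      atTop (nhds 0) := by
    simpa using (tendsto_inv_atTop_zero.const_mul (K / t)).add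
      ((tendsto_inv_atTop_zero.comp Real.tendsto_sqrt_atTop).const_mul (‖f‖ * ‖L₂ u‖ * (K + t)))
  refine squeeze_zero' (.of_forall fun _ => norm_nonneg _) ?_ (by simpa using hbound.sqrt)
  filter_upwards [eventually_gt_atTop 0] with γ hγ
  exact Real.le_sqrt_of_sq_le (norm_exp_smul_add_apply_sq_le h1 h2 hneg2 hu hu0 hc hgap hf hγ ht)

/-- let `L₁, L₂` be bounded nonpositive self-adjoint operators
on a real Hilbert space, `L^γ = γL₁ + L₂`. If `ker L₁` is one-dimensional,
spanned by the unit vector `u`, `L₁` has a spectral gap `c > 0` on `u^⊥`, and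
`f ⟂ u`, then `‖e^{tL^γ} f‖ → 0` as `γ → ∞`, for every `t > 0`. -/
theorem speeded_semigroup_spectral_gap
    {H : Type*} [NormedAddCommGroup H] [InnerProductSpace ℝ H] [CompleteSpace H]
    (L₁ L₂ : H →L[ℝ] H) (h1 : IsSelfAdjoint L₁) (h2 : IsSelfAdjoint L₂)
    (hneg1 : ∀ x : H, (inner ℝ (L₁ x) x : ℝ) ≤ 0)
    (hneg2 : ∀ x : H, (inner ℝ (L₂ x) x : ℝ) ≤ 0)
    (u : H) (hu : ‖u‖ = 1)
    (hker : LinearMap.ker (L₁ : H →ₗ[ℝ] H) = Submodule.span ℝ {u})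
    (c : ℝ) (hc : 0 < c)
    (hgap : ∀ g : H, (inner ℝ g u : ℝ) = 0 → (inner ℝ g (L₁ g) : ℝ) ≤ -c * ‖g‖ ^ 2)
    (f : H) (hf : (inner ℝ f u : ℝ) = 0)
    (t : ℝ) (ht : 0 < t) :
    Tendsto (fun γ : ℝ => ‖NormedSpace.exp (t • (γ • L₁ + L₂)) f‖)
      atTop (nhds 0) :=
  speeded_semigroup_spectral_gap_general L₁ L₂ h1 h2 hneg2 u hu hker c hc hgap f hf t ht
end

section
/- Let (Y_t) be the continuous-time random walk on ℤ with up-rate c⁺(y) = a(1-ρ(y+1))^N and down-rate c⁻(y) = b(1-ρ(y-1))^N, ρ(y) = (p/q)^y/(1+(p/q)^y), 0<p<q, and suppose a/b > (p/q)^N. Then the number Z = ∑_{y∈ℤ} (a/b)^y (1+(p/q)^y)^{-N} is finite and m(y) = Z^{-1}(a/b)^y(1+(p/q)^y)^{-N} is a stationary distribution: ∑_y m(y) Q(y,z) = 0 for all z ∈ ℤ, where Q is the rate matrix Q(y,y+1)=c⁺(y), Q(y,y-1)=c⁻(y), Q(y,y)=-(c⁺(y)+c⁻(y)). -/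
/-!
The weight `w(y) = s^y / (1 + r^y)^N` (with `s = a/b`, `r = p/q`) satisfies detailed balance
`w(y-1) c⁺(y-1) = w(y) c⁻(y)`, since `1 - ρ(y) = (1 + r^y)⁻¹` and the factor `s` in
`w(y) = s w(y-1)` is exactly the ratio of the rate prefactors `a` and `b`; for a birth-death
chain detailed balance implies stationarity. Summability comes from comparing with geometric
series: `w(n) ≤ s^n` as `y → +∞`, and `w(-n) ≤ (r^N / s)^n` as `y → -∞`, because
`1 + r^{-n} ≥ r^{-n}`.
-/

noncomputable def rodWeight (r s : ℝ) (N : ℕ) (y : ℤ) : ℝ := s ^ y / (1 + r ^ y) ^ N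

section rodWeight

variable {r s : ℝ} {N : ℕ}

lemma rodWeight_nonneg (hr : 0 < r) (hs : 0 ≤ s) (y : ℤ) : 0 ≤ rodWeight r s N y := by
  unfold rodWeight; positivity

lemma rodWeight_natCast_le (hr : 0 < r) (hs : 0 ≤ s) (n : ℕ) :
    rodWeight r s N n ≤ s ^ n := by
  have hden : 1 ≤ (1 + r ^ (n : ℤ)) ^ N :=
    one_le_pow₀ (le_add_of_nonneg_right (zpow_pos hr _).le)
  calc rodWeight r s N n ≤ s ^ (n : ℤ) / 1 := div_le_div_of_nonneg_left (by positivity) one_pos hden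
    _ = s ^ n := by rw [div_one, zpow_natCast]

lemma rodWeight_neg_natCast_le (hr : 0 < r) (hs : 0 < s) (n : ℕ) :
    rodWeight r s N (-n) ≤ (r ^ N / s) ^ n := by
  have hden : (r ^ (-(n : ℤ))) ^ N ≤ (1 + r ^ (-(n : ℤ))) ^ N :=
    pow_le_pow_left₀ (zpow_pos hr _).le (le_add_of_nonneg_left zero_le_one) N
  calc rodWeight r s N (-n) ≤ s ^ (-(n : ℤ)) / (r ^ (-(n : ℤ))) ^ N :=
        div_le_div_of_nonneg_left (zpow_pos hs _).le (by positivity) hden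
    _ = (r ^ N / s) ^ n := by
        rw [zpow_neg, zpow_neg, zpow_natCast, zpow_natCast, inv_pow, ← pow_mul, div_pow,
          ← pow_mul, mul_comm N n]
        field_simp

lemma summable_rodWeight (hr : 0 < r) (hrs : r ^ N < s) (hs : s < 1) :
    Summable (rodWeight r s N) := by
  have hs0 : 0 < s := (pow_pos hr N).trans hrs
  refine Summable.of_nat_of_neg ?_ ?_
  · exact (summable_geometric_of_lt_one hs0.le hs).of_nonneg_of_le
      (fun n => rodWeight_nonneg hr hs0.le n) (rodWeight_natCast_le hr hs0.le)
  · exact (summable_geometric_of_lt_one (by positivity) ((div_lt_one hs0).mpr hrs)).of_nonneg_of_le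
      (fun n => rodWeight_nonneg hr hs0.le _) (rodWeight_neg_natCast_le hr hs0)

lemma rodWeight_detailed_balance (hr : 0 < r) {a b : ℝ} (ha : a ≠ 0) (hb : b ≠ 0) (z : ℤ) :
    rodWeight r (a / b) N (z - 1) * (a * ((1 + r ^ z)⁻¹) ^ N)
      = rodWeight r (a / b) N z * (b * ((1 + r ^ (z - 1))⁻¹) ^ N) := by
  have hpos : ∀ y : ℤ, 0 < 1 + r ^ y := fun y => by positivity
  unfold rodWeight
  rw [zpow_sub_one₀ (div_ne_zero ha hb), inv_pow, inv_pow]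
  field_simp [(hpos z).ne', (hpos (z - 1)).ne']

end rodWeight

lemma one_sub_div_one_add {x : ℝ} (hx : 1 + x ≠ 0) : 1 - x / (1 + x) = (1 + x)⁻¹ := by
  field_simp
  ring

lemma birthDeath_stationary_of_detailed_balance {m cplus cminus : ℤ → ℝ}
    (h : ∀ z, m (z - 1) * cplus (z - 1) = m z * cminus z) (z : ℤ) :
    m (z - 1) * cplus (z - 1) + m (z + 1) * cminus (z + 1) = m z * (cplus z + cminus z) := by
  have hup := h (z + 1)
  rw [add_sub_cancel_right] at hup
  rw [h z, ← hup]
  ring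

theorem rod_stationary_distribution_general
    (a b p q : ℝ) (N : ℕ)
    (hp : 0 < p) (hpq : p < q)
    (hcond : (p / q) ^ N < a / b) (hab : a / b < 1)
    (ρ cplus cminus : ℤ → ℝ)
    (hρ : ∀ y : ℤ, ρ y = (p / q) ^ y / (1 + (p / q) ^ y))
    (hcp : ∀ y : ℤ, cplus y = a * (1 - ρ (y + 1)) ^ N)
    (hcm : ∀ y : ℤ, cminus y = b * (1 - ρ (y - 1)) ^ N)
    (Z : ℝ)
    (m : ℤ → ℝ) (hm : ∀ y : ℤ, m y = ((a / b) ^ y / (1 + (p / q) ^ y) ^ N) / Z) :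
    Summable (fun y : ℤ => (a / b) ^ y / (1 + (p / q) ^ y) ^ N)
    ∧ ∀ z : ℤ, m (z - 1) * cplus (z - 1) + m (z + 1) * cminus (z + 1)
        = m z * (cplus z + cminus z) := by
  have hr : 0 < p / q := div_pos hp (hp.trans hpq)
  have hab0 : a / b ≠ 0 := ((pow_pos hr N).trans hcond).ne'
  have hm' : ∀ y, m y = rodWeight (p / q) (a / b) N y / Z := hm
  have hρ' : ∀ y, 1 - ρ y = (1 + (p / q) ^ y)⁻¹ := fun y => by
    rw [hρ, one_sub_div_one_add (by positivity)]
  refine ⟨summable_rodWeight hr hcond hab, birthDeath_stationary_of_detailed_balance fun z => ?_⟩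
  rw [hm', hm', hcp, hcm, sub_add_cancel, hρ', hρ', div_mul_eq_mul_div, div_mul_eq_mul_div,
    rodWeight_detailed_balance hr (div_ne_zero_iff.mp hab0).1 (div_ne_zero_iff.mp hab0).2]

/-- for the rod's limiting birth-death chain on `ℤ` with rates
`c⁺(y) = a(1-ρ(y+1))^N`, `c⁻(y) = b(1-ρ(y-1))^N`, `ρ(y) = (p/q)^y/(1+(p/q)^y)`,
`0 < p < q`, and `a/b > (p/q)^N` (with the paper's standing assumption
`a/b < 1`), the sum `Z = ∑_{y∈ℤ} (a/b)^y (1+(p/q)^y)^{-N}` is finite and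
`m(y) = Z⁻¹(a/b)^y(1+(p/q)^y)^{-N}` is a stationary distribution:
`m(z-1)c⁺(z-1) + m(z+1)c⁻(z+1) = m(z)(c⁺(z)+c⁻(z))` for every `z`. -/
theorem rod_stationary_distribution
    (a b p q : ℝ) (N : ℕ) (ha : 0 < a) (hb : 0 < b)
    (hp : 0 < p) (hpq : p < q)
    (hcond : (p / q) ^ N < a / b) (hab : a / b < 1)
    (ρ cplus cminus : ℤ → ℝ)
    (hρ : ∀ y : ℤ, ρ y = (p / q) ^ y / (1 + (p / q) ^ y))
    (hcp : ∀ y : ℤ, cplus y = a * (1 - ρ (y + 1)) ^ N)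
    (hcm : ∀ y : ℤ, cminus y = b * (1 - ρ (y - 1)) ^ N)
    (Z : ℝ) (hZ : Z = ∑' y : ℤ, (a / b) ^ y / (1 + (p / q) ^ y) ^ N)
    (m : ℤ → ℝ) (hm : ∀ y : ℤ, m y = ((a / b) ^ y / (1 + (p / q) ^ y) ^ N) / Z) :
    Summable (fun y : ℤ => (a / b) ^ y / (1 + (p / q) ^ y) ^ N)
    ∧ ∀ z : ℤ, m (z - 1) * cplus (z - 1) + m (z + 1) * cminus (z + 1)
        = m z * (cplus z + cminus z) :=
  rod_stationary_distribution_general a b p q N hp hpq hcond hab ρ cplus cminus hρ hcp hcm Z m hm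
end
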